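/- Uniqueness of the subset repair for positive node constraints: if R is a set of positive Reg-GXPath node expressions, then every data-graph G has exactly one subset repair with respect to R. -/

import Mathlib

/-- A data-graph: a set of nodes, an edge labeling, and a data-value assignment. -/
structure DataGraph (V E Dv : Type) where
  nodes : Set V
  edges : V → V → Set E
  data : V → Dv

mutual
/-- Reg-GXPath path expressions. -/
inductive PExp (E Dv : Type) where
  | eps : PExp E Dv
  | wild : PExp E Dv
  | lab : E → PExp E Dv
  | inv : E → PExp E Dv
  | test : NExp E Dv → PExp E Dv
  | comp : PExp E Dv → PExp E Dv → PExp E Dv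
  | union : PExp E Dv → PExp E Dv → PExp E Dv
  | inter : PExp E Dv → PExp E Dv → PExp E Dv
  | star : PExp E Dv → PExp E Dv
  | compl : PExp E Dv → PExp E Dv
  | iter : PExp E Dv → ℕ → ℕ → PExp E Dv
/-- Reg-GXPath node expressions. -/
inductive NExp (E Dv : Type) where
  | neg : NExp E Dv → NExp E Dv
  | and : NExp E Dv → NExp E Dv → NExp E Dv
  | or : NExp E Dv → NExp E Dv → NExp E Dv
  | diam : PExp E Dv → NExp E Dv
  | eqc : Dv → NExp E Dv
  | neqc : Dv → NExp E Dv
  | cmpEq : PExp E Dv → PExp E Dv → NExp E Dv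
  | cmpNeq : PExp E Dv → PExp E Dv → NExp E Dv
end

variable {V E Dv : Type}

/-- Relational composition of binary relations presented as sets of pairs. -/
def dgComp (R S : Set (V × V)) : Set (V × V) := {p | ∃ y, (p.1, y) ∈ R ∧ (y, p.2) ∈ S}

/-- The identity relation on the nodes of a data-graph. -/
def DataGraph.idRel (G : DataGraph V E Dv) : Set (V × V) := {p | p.1 = p.2 ∧ p.1 ∈ G.nodes}

/-- Iterated relational composition, with `I` as the 0-th power (identity). -/
def dgPow (I R : Set (V × V)) : ℕ → Set (V × V)
  | 0 => I
  | k + 1 => dgComp (dgPow I R k) R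

mutual
/-- Semantics of path expressions on a data-graph: a set of pairs of nodes. -/
def psem (G : DataGraph V E Dv) : PExp E Dv → Set (V × V)
  | .eps => G.idRel
  | .wild => {p | p.1 ∈ G.nodes ∧ p.2 ∈ G.nodes ∧ (G.edges p.1 p.2).Nonempty}
  | .lab a => {p | p.1 ∈ G.nodes ∧ p.2 ∈ G.nodes ∧ a ∈ G.edges p.1 p.2}
  | .inv a => {p | p.1 ∈ G.nodes ∧ p.2 ∈ G.nodes ∧ a ∈ G.edges p.2 p.1}
  | .test φ => {p | p.1 = p.2 ∧ p.1 ∈ nsem G φ}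
  | .comp α β => dgComp (psem G α) (psem G β)
  | .union α β => psem G α ∪ psem G β
  | .inter α β => psem G α ∩ psem G β
  | .star α => G.idRel ∪ {p | Relation.TransGen (fun x y => (x, y) ∈ psem G α) p.1 p.2}
  | .compl α => {p | p.1 ∈ G.nodes ∧ p.2 ∈ G.nodes ∧ p ∉ psem G α}
  | .iter α n m => {p | ∃ k, n ≤ k ∧ k ≤ m ∧ p ∈ dgPow G.idRel (psem G α) k}
/-- Semantics of node expressions on a data-graph: a set of nodes. -/
def nsem (G : DataGraph V E Dv) : NExp E Dv → Set V
  | .neg φ => {v | v ∈ G.nodes ∧ v ∉ nsem G φ}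
  | .and φ ψ => nsem G φ ∩ nsem G ψ
  | .or φ ψ => nsem G φ ∪ nsem G ψ
  | .diam α => {v | ∃ w, (v, w) ∈ psem G α}
  | .eqc c => {v | v ∈ G.nodes ∧ G.data v = c}
  | .neqc c => {v | v ∈ G.nodes ∧ G.data v ≠ c}
  | .cmpEq α β => {v | ∃ v' v'', (v, v') ∈ psem G α ∧ (v, v'') ∈ psem G β ∧ G.data v' = G.data v''}
  | .cmpNeq α β => {v | ∃ v' v'', (v, v') ∈ psem G α ∧ (v, v'') ∈ psem G β ∧ G.data v' ≠ G.data v''}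
end

mutual
/-- Positive (complement/negation-free) path expressions. -/
def PExp.Positive : PExp E Dv → Prop
  | .eps => True
  | .wild => True
  | .lab _ => True
  | .inv _ => True
  | .test φ => φ.Positive
  | .comp α β => α.Positive ∧ β.Positive
  | .union α β => α.Positive ∧ β.Positive
  | .inter α β => α.Positive ∧ β.Positive
  | .star α => α.Positive
  | .compl _ => False
  | .iter α _ _ => α.Positive
/-- Positive (negation-free) node expressions. -/
def NExp.Positive : NExp E Dv → Prop
  | .neg _ => False
  | .and φ ψ => φ.Positive ∧ ψ.Positive
  | .or φ ψ => φ.Positive ∧ ψ.Positive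
  | .diam α => α.Positive
  | .eqc _ => True
  | .neqc _ => True
  | .cmpEq α β => α.Positive ∧ β.Positive
  | .cmpNeq α β => α.Positive ∧ β.Positive
end

/-- `G.Subgraph G'` : `G` is a sub-data-graph of `G'`. -/
def DataGraph.Subgraph (G G' : DataGraph V E Dv) : Prop :=
  G.nodes ⊆ G'.nodes ∧ (∀ v ∈ G.nodes, ∀ w ∈ G.nodes, G.edges v w ⊆ G'.edges v w) ∧
    ∀ v ∈ G.nodes, G.data v = G'.data v

/-- Consistency of a data-graph w.r.t. sets of path and node constraints. -/
def DataGraph.Consistent (G : DataGraph V E Dv)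
    (Rp : Set (PExp E Dv)) (Rn : Set (NExp E Dv)) : Prop :=
  (∀ α ∈ Rp, ∀ v ∈ G.nodes, ∀ w ∈ G.nodes, (v, w) ∈ psem G α) ∧
    (∀ φ ∈ Rn, ∀ v ∈ G.nodes, v ∈ nsem G φ)

/-- `H` is a subset repair of `G` w.r.t. constraints `Rp ∪ Rn`. -/
def IsSubsetRepair (H G : DataGraph V E Dv)
    (Rp : Set (PExp E Dv)) (Rn : Set (NExp E Dv)) : Prop :=
  H.Consistent Rp Rn ∧ H.Subgraph G ∧
    ∀ K : DataGraph V E Dv, K.Consistent Rp Rn → K.Subgraph G → H.Subgraph K → K.Subgraph H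

/-- `H` is a superset repair of `G` w.r.t. constraints `Rp ∪ Rn`. -/
def IsSupersetRepair (H G : DataGraph V E Dv)
    (Rp : Set (PExp E Dv)) (Rn : Set (NExp E Dv)) : Prop :=
  H.Consistent Rp Rn ∧ G.Subgraph H ∧
    ∀ K : DataGraph V E Dv, K.Consistent Rp Rn → G.Subgraph K → K.Subgraph H → H.Subgraph K
theorem subgraph_trans {A B C : DataGraph V E Dv} (hAB : A.Subgraph B) (hBC : B.Subgraph C) :
    A.Subgraph C := by
  obtain ⟨hn1, he1, hd1⟩ := hAB
  obtain ⟨hn2, he2, hd2⟩ := hBC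
  exact ⟨hn1.trans hn2,
    fun v hv w hw => (he1 v hv w hw).trans (he2 v (hn1 hv) w (hn1 hw)),
    fun v hv => (hd1 v hv).trans (hd2 v (hn1 hv))⟩

theorem dgPow_nodes {N : Set V} {I R : Set (V × V)}
    (hI : ∀ p ∈ I, p.1 ∈ N ∧ p.2 ∈ N) (hR : ∀ p ∈ R, p.1 ∈ N ∧ p.2 ∈ N) :
    ∀ k, ∀ p ∈ dgPow I R k, p.1 ∈ N ∧ p.2 ∈ N
  | 0, p, hp => hI p hp
  | k + 1, p, hp => by
    obtain ⟨y, h1, h2⟩ := hp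
    exact ⟨(dgPow_nodes hI hR k _ h1).1, (hR _ h2).2⟩

theorem dgPow_mono {I I' R R' : Set (V × V)} (hI : I ⊆ I') (hR : R ⊆ R') :
    ∀ k, dgPow I R k ⊆ dgPow I' R' k
  | 0 => hI
  | k + 1 => fun p hp => by
    obtain ⟨y, h1, h2⟩ := hp
    exact ⟨y, dgPow_mono hI hR k h1, hR h2⟩

theorem transGen_nodes {N : Set V} {r : V → V → Prop}
    (hr : ∀ x y, r x y → x ∈ N ∧ y ∈ N) {a b : V} (h : Relation.TransGen r a b) :
    a ∈ N ∧ b ∈ N := by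
  induction h with
  | single h => exact hr _ _ h
  | tail _ h ih => exact ⟨ih.1, (hr _ _ h).2⟩

mutual

theorem psem_nodes {H : DataGraph V E Dv} :
    ∀ α : PExp E Dv, α.Positive → ∀ p ∈ psem H α, p.1 ∈ H.nodes ∧ p.2 ∈ H.nodes
  | .eps, _, p, hp => by
    simp only [psem, DataGraph.idRel, Set.mem_setOf_eq] at hp
    exact ⟨hp.2, hp.1 ▸ hp.2⟩
  | .wild, _, p, hp => by
    simp only [psem, Set.mem_setOf_eq] at hp
    exact ⟨hp.1, hp.2.1⟩
  | .lab a, _, p, hp => by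
    simp only [psem, Set.mem_setOf_eq] at hp
    exact ⟨hp.1, hp.2.1⟩
  | .inv a, _, p, hp => by
    simp only [psem, Set.mem_setOf_eq] at hp
    exact ⟨hp.1, hp.2.1⟩
  | .test φ, hpos, p, hp => by
    simp only [psem, Set.mem_setOf_eq] at hp
    simp only [PExp.Positive] at hpos
    have := nsem_nodes φ hpos _ hp.2
    exact ⟨this, hp.1 ▸ this⟩
  | .comp α β, hpos, p, hp => by
    simp only [PExp.Positive] at hpos
    simp only [psem, dgComp, Set.mem_setOf_eq] at hp
    obtain ⟨y, h1, h2⟩ := hp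
    exact ⟨(psem_nodes α hpos.1 _ h1).1, (psem_nodes β hpos.2 _ h2).2⟩
  | .union α β, hpos, p, hp => by
    simp only [PExp.Positive] at hpos
    simp only [psem, Set.mem_union] at hp
    exact hp.elim (psem_nodes α hpos.1 p) (psem_nodes β hpos.2 p)
  | .inter α β, hpos, p, hp => by
    simp only [PExp.Positive] at hpos
    simp only [psem, Set.mem_inter_iff] at hp
    exact psem_nodes α hpos.1 p hp.1
  | .star α, hpos, p, hp => by
    simp only [PExp.Positive] at hpos
    simp only [psem, Set.mem_union, DataGraph.idRel, Set.mem_setOf_eq] at hp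
    rcases hp with hp | hp
    · exact ⟨hp.2, hp.1 ▸ hp.2⟩
    · exact transGen_nodes (fun x y h => psem_nodes α hpos (x, y) h) hp
  | .compl α, hpos, p, hp => by
    simp only [PExp.Positive] at hpos
  | .iter α n m, hpos, p, hp => by
    simp only [PExp.Positive] at hpos
    simp only [psem, Set.mem_setOf_eq] at hp
    obtain ⟨k, _, _, hk⟩ := hp
    exact dgPow_nodes (fun q hq => ⟨hq.2, hq.1 ▸ hq.2⟩) (psem_nodes α hpos) k p hk

theorem nsem_nodes {H : DataGraph V E Dv} :
    ∀ φ : NExp E Dv, φ.Positive → ∀ v ∈ nsem H φ, v ∈ H.nodes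
  | .neg φ, hpos, v, hv => by simp only [NExp.Positive] at hpos
  | .and φ ψ, hpos, v, hv => by
    simp only [NExp.Positive] at hpos
    simp only [nsem, Set.mem_inter_iff] at hv
    exact nsem_nodes φ hpos.1 v hv.1
  | .or φ ψ, hpos, v, hv => by
    simp only [NExp.Positive] at hpos
    simp only [nsem, Set.mem_union] at hv
    exact hv.elim (nsem_nodes φ hpos.1 v) (nsem_nodes ψ hpos.2 v)
  | .diam α, hpos, v, hv => by
    simp only [NExp.Positive] at hpos
    simp only [nsem, Set.mem_setOf_eq] at hv
    obtain ⟨w, hw⟩ := hv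
    exact (psem_nodes α hpos _ hw).1
  | .eqc c, _, v, hv => by
    simp only [nsem, Set.mem_setOf_eq] at hv; exact hv.1
  | .neqc c, _, v, hv => by
    simp only [nsem, Set.mem_setOf_eq] at hv; exact hv.1
  | .cmpEq α β, hpos, v, hv => by
    simp only [NExp.Positive] at hpos
    simp only [nsem, Set.mem_setOf_eq] at hv
    obtain ⟨v', v'', h1, _, _⟩ := hv
    exact (psem_nodes α hpos.1 _ h1).1
  | .cmpNeq α β, hpos, v, hv => by
    simp only [NExp.Positive] at hpos
    simp only [nsem, Set.mem_setOf_eq] at hv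
    obtain ⟨v', v'', h1, _, _⟩ := hv
    exact (psem_nodes α hpos.1 _ h1).1

end

mutual

theorem psem_mono {H K : DataGraph V E Dv} (hs : H.Subgraph K) :
    ∀ α : PExp E Dv, α.Positive → psem H α ⊆ psem K α
  | .eps, _, p, hp => by
    simp only [psem, DataGraph.idRel, Set.mem_setOf_eq] at hp ⊢
    exact ⟨hp.1, hs.1 hp.2⟩
  | .wild, _, p, hp => by
    simp only [psem, Set.mem_setOf_eq] at hp ⊢
    exact ⟨hs.1 hp.1, hs.1 hp.2.1, hp.2.2.mono (hs.2.1 _ hp.1 _ hp.2.1)⟩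
  | .lab a, _, p, hp => by
    simp only [psem, Set.mem_setOf_eq] at hp ⊢
    exact ⟨hs.1 hp.1, hs.1 hp.2.1, hs.2.1 _ hp.1 _ hp.2.1 hp.2.2⟩
  | .inv a, _, p, hp => by
    simp only [psem, Set.mem_setOf_eq] at hp ⊢
    exact ⟨hs.1 hp.1, hs.1 hp.2.1, hs.2.1 _ hp.2.1 _ hp.1 hp.2.2⟩
  | .test φ, hpos, p, hp => by
    simp only [PExp.Positive] at hpos
    simp only [psem, Set.mem_setOf_eq] at hp ⊢
    exact ⟨hp.1, nsem_mono hs φ hpos hp.2⟩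
  | .comp α β, hpos, p, hp => by
    simp only [PExp.Positive] at hpos
    simp only [psem, dgComp, Set.mem_setOf_eq] at hp ⊢
    obtain ⟨y, h1, h2⟩ := hp
    exact ⟨y, psem_mono hs α hpos.1 h1, psem_mono hs β hpos.2 h2⟩
  | .union α β, hpos, p, hp => by
    simp only [PExp.Positive] at hpos
    simp only [psem, Set.mem_union] at hp ⊢
    exact hp.imp (fun h => psem_mono hs α hpos.1 h) (fun h => psem_mono hs β hpos.2 h)
  | .inter α β, hpos, p, hp => by
    simp only [PExp.Positive] at hpos
    simp only [psem, Set.mem_inter_iff] at hp ⊢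
    exact ⟨psem_mono hs α hpos.1 hp.1, psem_mono hs β hpos.2 hp.2⟩
  | .star α, hpos, p, hp => by
    simp only [PExp.Positive] at hpos
    simp only [psem, Set.mem_union, DataGraph.idRel, Set.mem_setOf_eq] at hp ⊢
    rcases hp with hp | hp
    · exact Or.inl ⟨hp.1, hs.1 hp.2⟩
    · exact Or.inr (Relation.TransGen.mono (p := fun x y => (x, y) ∈ psem K α) (fun x y h => psem_mono hs α hpos h) _ _ hp)
  | .compl α, hpos, p, hp => by
    simp only [PExp.Positive] at hpos
  | .iter α n m, hpos, p, hp => by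
    simp only [PExp.Positive] at hpos
    simp only [psem, Set.mem_setOf_eq] at hp ⊢
    obtain ⟨k, h1, h2, hk⟩ := hp
    exact ⟨k, h1, h2,
      dgPow_mono (show H.idRel ⊆ K.idRel from fun q hq => ⟨hq.1, hs.1 hq.2⟩) (psem_mono hs α hpos) k hk⟩

theorem nsem_mono {H K : DataGraph V E Dv} (hs : H.Subgraph K) :
    ∀ φ : NExp E Dv, φ.Positive → nsem H φ ⊆ nsem K φ
  | .neg φ, hpos, v, hv => by simp only [NExp.Positive] at hpos
  | .and φ ψ, hpos, v, hv => by
    simp only [NExp.Positive] at hpos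
    simp only [nsem, Set.mem_inter_iff] at hv ⊢
    exact ⟨nsem_mono hs φ hpos.1 hv.1, nsem_mono hs ψ hpos.2 hv.2⟩
  | .or φ ψ, hpos, v, hv => by
    simp only [NExp.Positive] at hpos
    simp only [nsem, Set.mem_union] at hv ⊢
    exact hv.imp (fun h => nsem_mono hs φ hpos.1 h) (fun h => nsem_mono hs ψ hpos.2 h)
  | .diam α, hpos, v, hv => by
    simp only [NExp.Positive] at hpos
    simp only [nsem, Set.mem_setOf_eq] at hv ⊢
    obtain ⟨w, hw⟩ := hv
    exact ⟨w, psem_mono hs α hpos hw⟩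
  | .eqc c, _, v, hv => by
    simp only [nsem, Set.mem_setOf_eq] at hv ⊢
    exact ⟨hs.1 hv.1, (hs.2.2 v hv.1) ▸ hv.2⟩
  | .neqc c, _, v, hv => by
    simp only [nsem, Set.mem_setOf_eq] at hv ⊢
    exact ⟨hs.1 hv.1, (hs.2.2 v hv.1) ▸ hv.2⟩
  | .cmpEq α β, hpos, v, hv => by
    simp only [NExp.Positive] at hpos
    simp only [nsem, Set.mem_setOf_eq] at hv ⊢
    obtain ⟨v', v'', h1, h2, hd⟩ := hv
    refine ⟨v', v'', psem_mono hs α hpos.1 h1, psem_mono hs β hpos.2 h2, ?_⟩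
    rw [← hs.2.2 v' (psem_nodes α hpos.1 _ h1).2, ← hs.2.2 v'' (psem_nodes β hpos.2 _ h2).2]
    exact hd
  | .cmpNeq α β, hpos, v, hv => by
    simp only [NExp.Positive] at hpos
    simp only [nsem, Set.mem_setOf_eq] at hv ⊢
    obtain ⟨v', v'', h1, h2, hd⟩ := hv
    refine ⟨v', v'', psem_mono hs α hpos.1 h1, psem_mono hs β hpos.2 h2, ?_⟩
    rw [← hs.2.2 v' (psem_nodes α hpos.1 _ h1).2, ← hs.2.2 v'' (psem_nodes β hpos.2 _ h2).2]
    exact hd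

end

/-- The union of all consistent subgraphs of `G`. -/
def repairOf (G : DataGraph V E Dv) (R : Set (NExp E Dv)) : DataGraph V E Dv where
  nodes := {v | ∃ K : DataGraph V E Dv, K.Consistent ∅ R ∧ K.Subgraph G ∧ v ∈ K.nodes}
  edges v w := {e | ∃ K : DataGraph V E Dv,
    K.Consistent ∅ R ∧ K.Subgraph G ∧ v ∈ K.nodes ∧ w ∈ K.nodes ∧ e ∈ K.edges v w}
  data := G.data

theorem subgraph_repairOf {G K : DataGraph V E Dv} {R : Set (NExp E Dv)}
    (hKc : K.Consistent ∅ R) (hKG : K.Subgraph G) : K.Subgraph (repairOf G R) := by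
  refine ⟨fun v hv => ⟨K, hKc, hKG, hv⟩,
    fun v hv w hw e he => ⟨K, hKc, hKG, hv, hw, he⟩,
    fun v hv => hKG.2.2 v hv⟩

theorem repairOf_subgraph (G : DataGraph V E Dv) (R : Set (NExp E Dv)) :
    (repairOf G R).Subgraph G := by
  refine ⟨fun v hv => ?_, fun v _ w _ e he => ?_, fun v _ => rfl⟩
  · obtain ⟨K, _, hKG, hv⟩ := hv
    exact hKG.1 hv
  · obtain ⟨K, _, hKG, hv, hw, he⟩ := he
    exact hKG.2.1 v hv w hw he

theorem repairOf_consistent (G : DataGraph V E Dv) (R : Set (NExp E Dv))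
    (hpos : ∀ φ ∈ R, NExp.Positive φ) : (repairOf G R).Consistent ∅ R := by
  constructor
  · intro α hα; exact absurd hα (Set.notMem_empty α)
  · rintro φ hφ v ⟨K, hKc, hKG, hv⟩
    exact nsem_mono (subgraph_repairOf hKc hKG) φ (hpos φ hφ) (hKc.2 φ hφ v hv)

/-- for a set of positive node expressions, every (finite) data-graph has
exactly one subset repair (unique up to mutual subgraph equivalence). -/
theorem stmt4 {V E Dv : Type} (G : DataGraph V E Dv) (R : Set (NExp E Dv))
    (hpos : ∀ φ ∈ R, NExp.Positive φ)
    (hGn : G.nodes.Finite) (hGe : ∀ v w, (G.edges v w).Finite) :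
    (∃ H : DataGraph V E Dv, IsSubsetRepair H G ∅ R) ∧
      ∀ H H' : DataGraph V E Dv, IsSubsetRepair H G ∅ R → IsSubsetRepair H' G ∅ R →
        H.Subgraph H' ∧ H'.Subgraph H := by
  have hMc := repairOf_consistent G R hpos
  have hMG := repairOf_subgraph G R
  constructor
  · exact ⟨repairOf G R, hMc, hMG, fun K hKc hKG _ => subgraph_repairOf hKc hKG⟩
  · intro H H' hH hH'
    have hHM : H.Subgraph (repairOf G R) := subgraph_repairOf hH.1 hH.2.1
    have hH'M : H'.Subgraph (repairOf G R) := subgraph_repairOf hH'.1 hH'.2.1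
    have hMH : (repairOf G R).Subgraph H := hH.2.2 _ hMc hMG hHM
    have hMH' : (repairOf G R).Subgraph H' := hH'.2.2 _ hMc hMG hH'M
    exact ⟨subgraph_trans hHM hMH', subgraph_trans hH'M hMH⟩
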